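/- arXiv:1804.00241 — 8 statements merged into one kernel-verified Lean document; each statement's English description precedes it below -/
import Mathlib

section
/- Let c be a point, r > 0, m points p_1,...,p_m with assigned-index function π where π(q) is the smallest index i (in a sorted weight list w_1 ≤ ... ≤ w_m) such that d(q,c)/w_i ≤ r (with π(q) = m+1 if no such index exists). Suppose the points are relabeled so that π(q_1) ≤ π(q_2) ≤ ... ≤ π(q_m). Then there exists a bijective assignment of the weights w_1,...,w_m to the points with all weighted distances from c at most r, if and only if π(q_ℓ) ≤ ℓ for every ℓ with 1 ≤ ℓ ≤ m. -/
abbrev Pt := EuclideanSpace ℝ (Fin 2)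

theorem stmt_2 (m : ℕ) (c : Pt) (r : ℝ) (hr : 0 < r)
    (q : Fin m → Pt) (w : Fin m → ℝ)
    (hwpos : ∀ i, 0 < w i) (hw : Monotone w)
    (π : Fin m → ℕ)
    (hπ : ∀ i, π i = sInf ({j : ℕ | ∃ h : j < m, dist (q i) c / w ⟨j, h⟩ ≤ r} ∪ {m}))
    (hsorted : Monotone π) :
    (∃ σ : Equiv.Perm (Fin m), ∀ i, dist (q i) c / w (σ i) ≤ r) ↔
      (∀ i : Fin m, π i ≤ (i : ℕ)) := by
  -- key: π k ≤ j ↔ dist (q k) c / w j ≤ r for j : Fin m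
  have key_le : ∀ (k : Fin m) (j : Fin m), dist (q k) c / w j ≤ r → π k ≤ (j : ℕ) := by
    intro k j h
    rw [hπ]
    exact Nat.sInf_le (Or.inl ⟨j.isLt, by simpa using h⟩)
  have key_mem : ∀ (k : Fin m) (hk : π k < m), dist (q k) c / w ⟨π k, hk⟩ ≤ r := by
    intro k hk
    have hne : sInf ({j : ℕ | ∃ h : j < m, dist (q k) c / w ⟨j, h⟩ ≤ r} ∪ {m}) ∈ _ :=
      Nat.sInf_mem (s := {j : ℕ | ∃ h : j < m, dist (q k) c / w ⟨j, h⟩ ≤ r} ∪ {m})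
        ⟨m, Or.inr rfl⟩
    rw [← hπ] at hne
    rcases hne with ⟨h', hle⟩ | hm
    · exact hle
    · simp only [Set.mem_singleton_iff] at hm; omega
  constructor
  · rintro ⟨σ, hσ⟩ i
    -- find k ≥ i with σ k ≤ i
    by_contra hlt
    push_neg at hlt
    have hall : ∀ k : Fin m, i ≤ k → (i : ℕ) < σ k := by
      intro k hk
      by_contra h
      push_neg at h
      have h1 : π k ≤ (σ k : ℕ) := key_le k (σ k) (hσ k)
      have := hsorted hk
      omega
    -- pigeonhole
    have hmap : (Finset.Ici i).image σ ⊆ Finset.Ioi i := by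
      intro x hx
      simp only [Finset.mem_image, Finset.mem_Ici] at hx
      rcases hx with ⟨k, hk, rfl⟩
      exact Finset.mem_Ioi.mpr (Fin.lt_def.mpr (hall k hk))
    have hcard : (Finset.Ici i).card ≤ (Finset.Ioi i).card := by
      calc (Finset.Ici i).card = ((Finset.Ici i).image σ).card :=
            (Finset.card_image_of_injective _ σ.injective).symm
        _ ≤ (Finset.Ioi i).card := Finset.card_le_card hmap
    rw [Fin.card_Ici, Fin.card_Ioi] at hcard
    omega
  · intro h
    refine ⟨Equiv.refl _, fun i => ?_⟩
    have hi := h i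
    have him : π i < m := lt_of_le_of_lt hi i.isLt
    have h1 := key_mem i him
    have h2 : w ⟨π i, him⟩ ≤ w i := hw (by simpa [Fin.le_def] using hi)
    calc dist (q i) c / w i ≤ dist (q i) c / w ⟨π i, him⟩ := by
          gcongr
          · exact hwpos _
        _ ≤ r := h1
end

section
/- Let P be a finite set of weighted points in the plane with positive weights, and suppose a point c minimizes the maximum weighted distance max_{p ∈ P} d(p,c)/w(p). Then there exists a subset S ⊆ P with |S| ≤ 3 such that c also minimizes max_{p ∈ S} d(p,c)/w(p) and the minimum values over S and over P are equal. -/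
open Filter Topology Module
open scoped RealInnerProductSpace

section Caratheodory

variable {𝕜 E : Type*} [Field 𝕜] [LinearOrder 𝕜] [IsStrictOrderedRing 𝕜] [AddCommGroup E]
  [Module 𝕜 E] [FiniteDimensional 𝕜 E]

theorem exists_finset_card_le_finrank_succ_of_mem_convexHull {s : Set E} {x : E}
    (hx : x ∈ convexHull 𝕜 s) :
    ∃ t : Finset E, ↑t ⊆ s ∧ t.card ≤ finrank 𝕜 E + 1 ∧ x ∈ convexHull 𝕜 (t : Set E) := by
  rw [convexHull_eq_union] at hx
  simp only [Set.mem_iUnion] at hx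
  obtain ⟨t, hts, ht, hxt⟩ := hx
  refine ⟨t, hts, ?_, hxt⟩
  have hcard := ht.card_le_finrank_succ
  rw [Fintype.card_coe] at hcard
  exact hcard.trans (Nat.add_le_add_right (Submodule.finrank_le _) 1)

end Caratheodory

section InnerProductSpace

variable {E : Type*} [NormedAddCommGroup E] [InnerProductSpace ℝ E]

theorem exists_forall_inner_sub_pos_of_notMem [CompleteSpace E] {K : Set E}
    (hKconv : Convex ℝ K) (hKclosed : IsClosed K) {c : E} (hc : c ∉ K) :
    ∃ v : E, ∀ p ∈ K, 0 < ⟪v, p - c⟫ := by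
  obtain ⟨f, u, hfc, hf⟩ := geometric_hahn_banach_point_closed hKconv hKclosed hc
  refine ⟨(InnerProductSpace.toDual ℝ E).symm f, fun p hp => ?_⟩
  rw [inner_sub_right, InnerProductSpace.toDual_symm_apply, InnerProductSpace.toDual_symm_apply]
  linarith [hf p hp]

theorem exists_inner_sub_nonpos_of_mem_convexHull {s : Set E} {c : E}
    (hc : c ∈ convexHull ℝ s) (x : E) : ∃ p ∈ s, ⟪p - c, x - c⟫ ≤ 0 := by
  by_contra! h
  have hhalf : Convex ℝ {p : E | ⟪x - c, c⟫ < ⟪x - c, p⟫} :=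
    convex_halfSpace_gt (innerSL ℝ (x - c)).toLinearMap.isLinear _
  have hsub : s ⊆ {p : E | ⟪x - c, c⟫ < ⟪x - c, p⟫} := by
    intro p hp
    have hp' := h p hp
    rw [inner_sub_left] at hp'
    show ⟪x - c, c⟫ < ⟪x - c, p⟫
    rw [real_inner_comm c, real_inner_comm p]
    linarith
  simpa using convexHull_min hsub hhalf hc

theorem dist_le_dist_of_inner_sub_nonpos {p c x : E} (h : ⟪p - c, x - c⟫ ≤ 0) :
    dist p c ≤ dist p x := by
  have hpx : p - x = (p - c) - (x - c) := by abel
  rw [dist_eq_norm, dist_eq_norm, ← sq_le_sq₀ (norm_nonneg _) (norm_nonneg _), hpx,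
    norm_sub_sq_real (p - c) (x - c)]
  nlinarith [sq_nonneg ‖x - c‖]

theorem eventually_dist_add_smul_lt {p c v : E} (h : 0 < ⟪v, p - c⟫) :
    ∀ᶠ t in 𝓝[>] (0 : ℝ), dist p (c + t • v) < dist p c := by
  have hv : 0 < ‖v‖ ^ 2 := by
    have : v ≠ 0 := by rintro rfl; simp at h
    positivity
  filter_upwards [Ioo_mem_nhdsGT (div_pos (mul_pos two_pos h) hv)] with t ⟨ht0, ht⟩
  rw [lt_div_iff₀ hv] at ht
  rw [dist_eq_norm, dist_eq_norm, ← sq_lt_sq₀ (norm_nonneg _) (norm_nonneg _), sub_add_eq_sub_sub,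
    norm_sub_sq_real, real_inner_smul_right, norm_smul, Real.norm_of_nonneg ht0.le,
    real_inner_comm]
  nlinarith

end InnerProductSpace

section WeightedRadius

variable {X : Type*} [PseudoMetricSpace X]

/-- As a real `⨆`, the terms with `p ∉ S` contribute `sSup ∅ = 0`, so this is the maximum of the
weighted distances only when they are nonnegative. -/
noncomputable def weightedRadius (S : Finset X) (w : X → ℝ) (x : X) : ℝ :=
  ⨆ p ∈ (S : Set X), dist p x / w p

theorem weightedRadius_eq_sup' {S : Finset X} (hS : S.Nonempty) {w : X → ℝ}
    (hw : ∀ p ∈ S, 0 ≤ w p) (x : X) :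
    weightedRadius S w x = S.sup' hS (fun p => dist p x / w p) := by
  set f := fun p => dist p x / w p
  obtain ⟨a, ha⟩ := hS
  have h0 : 0 ≤ S.sup' ⟨a, ha⟩ f := (div_nonneg dist_nonneg (hw a ha)).trans (S.le_sup' f ha)
  have hle : ∀ p, ⨆ _ : p ∈ (S : Set X), f p ≤ S.sup' ⟨a, ha⟩ f :=
    fun p => Real.iSup_le (fun hp => S.le_sup' f hp) h0
  refine le_antisymm (Real.iSup_le hle h0) (Finset.sup'_le _ _ fun p hp => ?_)
  exact le_ciSup_of_le ⟨_, Set.forall_mem_range.2 hle⟩ p (ciSup_pos (f := fun _ => f p) hp).ge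

theorem weightedRadius_eq_of_forall_eq {S : Finset X} (hS : S.Nonempty) {w : X → ℝ}
    (hw : ∀ p ∈ S, 0 ≤ w p) {c : X} {r : ℝ} (h : ∀ p ∈ S, dist p c / w p = r) :
    weightedRadius S w c = r := by
  rw [weightedRadius_eq_sup' hS hw]
  exact le_antisymm (Finset.sup'_le _ _ fun p hp => (h p hp).le)
    (hS.elim fun p hp => (h p hp).ge.trans (S.le_sup' (fun q => dist q c / w q) hp))

variable {E : Type*} [NormedAddCommGroup E] [InnerProductSpace ℝ E]

theorem le_weightedRadius_of_mem_convexHull {S : Finset E} {w : E → ℝ}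
    (hw : ∀ p ∈ S, 0 < w p) {c : E} {r : ℝ} (h : ∀ p ∈ S, dist p c / w p = r)
    (hc : c ∈ convexHull ℝ (S : Set E)) (x : E) : r ≤ weightedRadius S w x := by
  obtain ⟨p, hp, hpx⟩ := exists_inner_sub_nonpos_of_mem_convexHull hc x
  rw [weightedRadius_eq_sup' ⟨p, hp⟩ fun q hq => (hw q hq).le, ← h p hp]
  exact (div_le_div_of_nonneg_right (dist_le_dist_of_inner_sub_nonpos hpx) (hw p hp).le).trans
    (S.le_sup' (fun q => dist q x / w q) hp)

/-- If `c` were outside this hull, a small step towards a direction separating it from the hull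
would decrease every weighted distance. -/
theorem mem_convexHull_of_forall_weightedRadius_le [CompleteSpace E] {P : Finset E}
    (hP : P.Nonempty) {w : E → ℝ} (hw : ∀ p ∈ P, 0 < w p) {c : E}
    (hc : ∀ x, weightedRadius P w c ≤ weightedRadius P w x) :
    c ∈ convexHull ℝ (↑{p ∈ P | dist p c / w p = weightedRadius P w c} : Set E) := by
  have hR := weightedRadius_eq_sup' hP fun p hp => (hw p hp).le
  by_contra hcF
  obtain ⟨v, hv⟩ := exists_forall_inner_sub_pos_of_notMem (convex_convexHull ℝ _)
    ((Finset.finite_toSet _).isClosed_convexHull (𝕜 := ℝ)) hcF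
  have hdecr : ∀ p ∈ P, ∀ᶠ t in 𝓝[>] (0 : ℝ),
      dist p (c + t • v) / w p < weightedRadius P w c := by
    intro p hp
    rcases (hR c ▸ P.le_sup' (fun q => dist q c / w q) hp).eq_or_lt with heq | hlt
    · have hpv := hv p (subset_convexHull ℝ _ (by simp [hp, heq]))
      filter_upwards [eventually_dist_add_smul_lt hpv] with t ht
      rw [← heq]
      exact div_lt_div_of_pos_right ht (hw p hp)
    · have hcont : Tendsto (fun t : ℝ => dist p (c + t • v) / w p) (𝓝 0)
          (𝓝 (dist p c / w p)) := by
        simpa using (by fun_prop : Continuous fun t : ℝ => dist p (c + t • v) / w p).tendsto 0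
      exact nhdsWithin_le_nhds (hcont.eventually_lt_const hlt)
  obtain ⟨t, ht⟩ := ((eventually_all_finset P).2 hdecr).exists
  exact (hc (c + t • v)).not_gt (by rwa [hR, Finset.sup'_lt_iff])

end WeightedRadius

theorem stmt_3 (P : Finset Pt) (hP : P.Nonempty) (w : Pt → ℝ)
    (hw : ∀ p ∈ P, 0 < w p) (c : Pt)
    (hc : ∀ x : Pt, (⨆ p ∈ (P : Set Pt), dist p c / w p) ≤ ⨆ p ∈ (P : Set Pt), dist p x / w p) :
    ∃ S : Finset Pt, S ⊆ P ∧ S.card ≤ 3 ∧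
      (∀ x : Pt, (⨆ p ∈ (S : Set Pt), dist p c / w p) ≤ ⨆ p ∈ (S : Set Pt), dist p x / w p) ∧
      (⨆ p ∈ (S : Set Pt), dist p c / w p) = ⨆ p ∈ (P : Set Pt), dist p c / w p := by
  obtain ⟨S, hSF, hcard, hcS⟩ := exists_finset_card_le_finrank_succ_of_mem_convexHull
    (mem_convexHull_of_forall_weightedRadius_le hP hw hc)
  rw [finrank_euclideanSpace_fin] at hcard
  have hSP : S ⊆ P := fun p hp => (Finset.mem_filter.1 (hSF hp)).1
  have hSw : ∀ p ∈ S, 0 < w p := fun p hp => hw p (hSP hp)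
  have hSc : ∀ p ∈ S, dist p c / w p = weightedRadius P w c := fun p hp =>
    (Finset.mem_filter.1 (hSF hp)).2
  have hrS : weightedRadius S w c = weightedRadius P w c :=
    weightedRadius_eq_of_forall_eq (Finset.coe_nonempty.1 (convexHull_nonempty_iff.1 ⟨c, hcS⟩))
      (fun p hp => (hSw p hp).le) hSc
  exact ⟨S, hSP, hcard,
    fun x => hrS.trans_le (le_weightedRadius_of_mem_convexHull hSw hSc hcS x), hrS⟩
end

section
/- For weighted points in the plane with positive weights, the function x ↦ max_{p ∈ P} d(p,x)/w(p) (for a finite nonempty set P) attains its minimum at a unique point. -/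
theorem stmt_4 (P : Finset Pt) (hP : P.Nonempty) (w : Pt → ℝ)
    (hw : ∀ p ∈ P, 0 < w p) :
    ∃! c : Pt, ∀ x : Pt,
      P.sup' hP (fun p => dist p c / w p) ≤ P.sup' hP (fun p => dist p x / w p) := by
  set f : Pt → ℝ := fun x => P.sup' hP (fun p => dist p x / w p) with hf
  have hle : ∀ (q : Pt), q ∈ P → ∀ x : Pt, dist q x / w q ≤ f x := fun q hq x =>
    Finset.le_sup' (f := fun p => dist p x / w p) hq
  -- continuity
  have hcont : Continuous f := by
    rw [continuous_iff_continuousAt]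
    intro x
    exact ContinuousAt.finset_sup'_apply hP fun p _ =>
      ((continuous_const.dist continuous_id).div_const _).continuousAt
  -- coercivity
  obtain ⟨p0, hp0⟩ := id hP
  have hw0 : 0 < w p0 := hw p0 hp0
  have hcoer : Filter.Tendsto f (Filter.cocompact Pt) Filter.atTop := by
    have h1 : Filter.Tendsto (fun x : Pt => (‖x‖ - ‖p0‖) / w p0)
        (Filter.cocompact Pt) Filter.atTop :=
      (tendsto_norm_cocompact_atTop.atTop_add tendsto_const_nhds).atTop_div_const hw0
    refine Filter.tendsto_atTop_mono (fun x => ?_) h1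
    have h2 : ‖x‖ - ‖p0‖ ≤ dist p0 x := by
      rw [dist_comm, dist_eq_norm]
      linarith [abs_le.mp (abs_norm_sub_norm_le x p0)]
    calc (‖x‖ - ‖p0‖) / w p0 ≤ dist p0 x / w p0 := by gcongr
      _ ≤ f x := hle p0 hp0 x
  obtain ⟨c, hc⟩ := hcont.exists_forall_le hcoer
  refine ⟨c, hc, fun c' hc' => ?_⟩
  -- uniqueness
  have hM : f c' = f c := le_antisymm (hc' c) (hc c')
  set M := f c with hMdef
  have hMnonneg : 0 ≤ M :=
    le_trans (div_nonneg dist_nonneg hw0.le) (hle p0 hp0 c)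
  rcases eq_or_lt_of_le hMnonneg with h0 | hpos
  · -- M = 0 : all points of P equal c and c'
    have hq : ∀ q ∈ P, ∀ z : Pt, f z = M → q = z := by
      intro q hq z hz
      have h1 : dist q z / w q ≤ M := hz ▸ hle q hq z
      have hwq := hw q hq
      have : dist q z = 0 := by
        have h2 : dist q z / w q ≤ 0 := h1.trans_eq h0.symm
        have h3 : dist q z ≤ 0 * w q := (div_le_iff₀ hwq).mp h2
        have := dist_nonneg (x := q) (y := z)
        linarith
      exact dist_eq_zero.mp this
    exact (hq p0 hp0 c' hM).symm.trans (hq p0 hp0 c rfl)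
  · -- M > 0 : strict convexity argument
    set m : Pt := midpoint ℝ c' c with hm
    obtain ⟨p, hp, hpm⟩ := Finset.exists_mem_eq_sup' hP (fun p => dist p m / w p)
    have hwp : 0 < w p := hw p hp
    have hfm : f m = dist p m / w p := hpm
    have hMle : M ≤ f m := hc m
    have hmid : ‖(p - c') + (p - c)‖ = 2 * dist p m := by
      have h2 : m + m = c' + c := midpoint_add_self ℝ c' c
      have h3 : (p - c') + (p - c) = (2:ℝ) • (p - m) := by
        rw [two_smul, show p - m + (p - m) = p + p - (m + m) by abel, h2]; abel
      rw [h3, norm_smul, dist_eq_norm]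
      norm_num
    -- dist p m ≤ (dist p c' + dist p c)/2
    have hkey : dist p m * 2 ≤ dist p c' + dist p c := by
      have := norm_add_le (p - c') (p - c)
      rw [hmid] at this
      rw [dist_eq_norm p c', dist_eq_norm p c]
      linarith
    have hc'le : dist p c' / w p ≤ M := hM ▸ hle p hp c'
    have hcle : dist p c / w p ≤ M := hle p hp c
    have h1 : M * w p ≤ dist p m := (le_div_iff₀ hwp).mp (hMle.trans_eq hfm)
    -- equalities throughout
    have hdist' : dist p c' = M * w p := by
      have ha : dist p c' ≤ M * w p := (div_le_iff₀ hwp).mp hc'le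
      have hb : dist p c ≤ M * w p := (div_le_iff₀ hwp).mp hcle
      linarith
    have hdist : dist p c = M * w p := by
      have ha : dist p c' ≤ M * w p := (div_le_iff₀ hwp).mp hc'le
      have hb : dist p c ≤ M * w p := (div_le_iff₀ hwp).mp hcle
      linarith
    have hnormadd : ‖(p - c') + (p - c)‖ = ‖p - c'‖ + ‖p - c‖ := by
      rw [hmid, ← dist_eq_norm, ← dist_eq_norm, hdist', hdist]
      linarith
    have hray : SameRay ℝ (p - c') (p - c) := sameRay_iff_norm_add.mpr hnormadd
    have hne : ‖p - c'‖ = ‖p - c‖ := by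
      rw [← dist_eq_norm, ← dist_eq_norm, hdist', hdist]
    have heq := hray.eq_of_norm_eq hne
    have : c' = c := by
      have h := congrArg (fun z => p - z) (rfl : p - c' = p - c').symm
      have := congrArg (fun z => -z + p) heq
      simpa using this
    exact this
end

section
/- Let f* be an optimal assignment of weights (minimizing the covering radius r(f)) with the minimum number of determinators among all optimal assignments, let c* = c(f*) be its weighted center and r* = r(f*) its covering radius. If p is a determinator of f* (i.e., d(p,c*)/f*(p) = r*) and p is the i-th closest point of P to c*, then f*(p) is the i-th smallest value in the multiset W₁ consisting of the weights of W together with n−k copies of weight 1. -/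
/-- `f` is an assignment of the weights of `W` to the points of `P`: each weight of `W`
is assigned to a distinct point and the remaining points get weight `1`. -/
def IsAssignment (P : Finset Pt) (W : Multiset ℝ) (f : Pt → ℝ) : Prop :=
  Multiset.map f P.val = W + Multiset.replicate (P.card - Multiset.card W) 1

lemma sorted_getD_key {l : List ℝ} (hl : l.Pairwise (· ≤ ·)) {a : ℝ} {j : ℕ}
    (hj : j < l.length)
    (h1 : (l.filter (fun x => x < a)).length ≤ j)
    (h2 : (l.filter (fun x => a < x)).length ≤ l.length - (j+1)) :
    l.getD j 0 = a := by
  have hget : l.getD j 0 = l[j] := List.getD_eq_getElem l 0 hj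
  rw [hget]
  by_contra hne
  have hmono : ∀ m k (hm : m < l.length) (hk : k < l.length), m ≤ k → l[m] ≤ l[k] := by
    intro m k hm hk hmk
    rcases eq_or_lt_of_le hmk with rfl | hlt
    · exact le_refl _
    · exact List.pairwise_iff_getElem.1 hl m k hm hk hlt
  rcases lt_or_gt_of_ne hne with h | h
  · have hall : ∀ x ∈ l.take (j+1), x < a := by
      intro x hx
      obtain ⟨m, hm, rfl⟩ := List.mem_iff_getElem.1 hx
      have hmlen : m < l.length := by
        have := hm; rw [List.length_take] at this; omega
      rw [List.getElem_take]
      have hmj : m ≤ j := by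
        have := hm; rw [List.length_take] at this; omega
      exact lt_of_le_of_lt (hmono m j hmlen hj hmj) h
    have hsplit : l.filter (fun x => decide (x < a)) =
        (l.take (j+1)).filter (fun x => decide (x < a)) ++
        (l.drop (j+1)).filter (fun x => decide (x < a)) := by
      conv_lhs => rw [← List.take_append_drop (j+1) l]
      rw [List.filter_append]
    have heq : (l.take (j+1)).filter (fun x => decide (x < a)) = l.take (j+1) :=
      List.filter_eq_self.2 (fun x hx => decide_eq_true (hall x hx))
    have : j + 1 ≤ (l.filter (fun x => decide (x < a))).length := by
      rw [hsplit, List.length_append, heq, List.length_take]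
      omega
    omega
  · have hall : ∀ x ∈ l.drop j, a < x := by
      intro x hx
      obtain ⟨m, hm, rfl⟩ := List.mem_iff_getElem.1 hx
      rw [List.getElem_drop]
      have hjm : j + m < l.length := by
        have := hm; rw [List.length_drop] at this; omega
      exact lt_of_lt_of_le h (hmono j (j+m) hj hjm (Nat.le_add_right _ _))
    have hsplit : l.filter (fun x => decide (a < x)) =
        (l.take j).filter (fun x => decide (a < x)) ++
        (l.drop j).filter (fun x => decide (a < x)) := by
      conv_lhs => rw [← List.take_append_drop j l]
      rw [List.filter_append]
    have heq : (l.drop j).filter (fun x => decide (a < x)) = l.drop j :=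
      List.filter_eq_self.2 (fun x hx => decide_eq_true (hall x hx))
    have : l.length - j ≤ (l.filter (fun x => decide (a < x))).length := by
      rw [hsplit, List.length_append, heq, List.length_drop]
      omega
    omega

theorem stmt_7 (P : Finset Pt) (hP : P.Nonempty) (W : Multiset ℝ)
    (hk : Multiset.card W ≤ P.card) (hWpos : ∀ w ∈ W, (0:ℝ) < w)
    (fs : Pt → ℝ) (hfs : IsAssignment P W fs)
    (cs : Pt) (rs : ℝ)
    -- cs is the weighted center of P under fs, and rs its covering radius
    (hcs : ∀ x : Pt, P.sup' hP (fun p => dist p cs / fs p) ≤ P.sup' hP (fun p => dist p x / fs p))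
    (hrs : rs = P.sup' hP (fun p => dist p cs / fs p))
    -- fs is an optimal assignment
    (hopt : ∀ (f : Pt → ℝ) (c : Pt), IsAssignment P W f →
      rs ≤ P.sup' hP (fun p => dist p c / f p))
    -- fs has the minimum number of determinators among optimal assignments
    (hmindet : ∀ (f : Pt → ℝ) (c : Pt), IsAssignment P W f →
      (∀ x : Pt, P.sup' hP (fun p => dist p c / f p) ≤ P.sup' hP (fun p => dist p x / f p)) →
      P.sup' hP (fun p => dist p c / f p) = rs →
      (P.filter (fun p => dist p cs / fs p = rs)).card ≤
        (P.filter (fun p => dist p c / f p = rs)).card)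
    -- distances to cs are pairwise distinct
    (hdist : Set.InjOn (fun p => dist p cs) (P : Set Pt))
    (p : Pt) (hp : p ∈ P) (hdet : dist p cs / fs p = rs)
    (i : ℕ) (hi : i = (P.filter (fun q => dist q cs ≤ dist p cs)).card) :
    fs p = ((W + Multiset.replicate (P.card - Multiset.card W) 1).sort (· ≤ ·)).getD (i - 1) 0 := by
  classical
  have hpos : ∀ q ∈ P, 0 < fs q := by
    intro q hq
    have hm : fs q ∈ Multiset.map fs P.val := Multiset.mem_map_of_mem fs hq
    rw [hfs] at hm
    rcases Multiset.mem_add.1 hm with h | h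
    · exact hWpos _ h
    · rw [Multiset.eq_of_mem_replicate h]; norm_num
  have hpp := hpos p hp
  have hub : ∀ q ∈ P, dist q cs / fs q ≤ rs := fun q hq =>
    hrs ▸ Finset.le_sup' (fun r => dist r cs / fs r) hq
  -- Step 1: points strictly farther than p have strictly larger weight
  have step1 : ∀ q ∈ P, dist p cs < dist q cs → fs p < fs q := by
    intro q hq hlt
    by_contra hle
    push_neg at hle
    have h1 := hub q hq
    have h2 : dist q cs / fs p ≤ dist q cs / fs q :=
      div_le_div_of_nonneg_left dist_nonneg (hpos q hq) hle
    have h3 : dist p cs / fs p < dist q cs / fs p := by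
      exact div_lt_div_of_pos_right hlt hpp
    rw [hdet] at h3
    linarith
  -- Step 2: points strictly closer than p have weight ≤ fs p (exchange argument)
  have step2 : ∀ q ∈ P, dist q cs < dist p cs → fs q ≤ fs p := by
    intro q hq hlt
    by_contra hgt
    push_neg at hgt
    have hqp : q ≠ p := by rintro rfl; exact lt_irrefl _ hlt
    have hdp0 : 0 < dist p cs := lt_of_le_of_lt dist_nonneg hlt
    set f' : Pt → ℝ := fun x => if x = p then fs q else if x = q then fs p else fs x with hf'
    have hswap : ∀ x, f' (Equiv.swap p q x) = fs x := by
      intro x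
      rcases eq_or_ne x p with rfl | hxp
      · simp [f', Equiv.swap_apply_left, hqp]
      · rcases eq_or_ne x q with rfl | hxq
        · simp [f', Equiv.swap_apply_right]
        · simp [f', Equiv.swap_apply_of_ne_of_ne hxp hxq, hxp, hxq]
    have hPmap : Multiset.map (Equiv.swap p q) P.val = P.val := by
      have hPm : P.map (Equiv.swap p q).toEmbedding = P := by
        apply Finset.eq_of_subset_of_card_le
        · intro x hx
          simp only [Finset.mem_map, Equiv.coe_toEmbedding] at hx
          obtain ⟨y, hy, rfl⟩ := hx
          rcases eq_or_ne y p with rfl | hyp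
          · simpa [Equiv.swap_apply_left] using hq
          rcases eq_or_ne y q with rfl | hyq
          · simpa [Equiv.swap_apply_right] using hp
          · simpa [Equiv.swap_apply_of_ne_of_ne hyp hyq] using hy
        · simp [Finset.card_map]
      calc Multiset.map (⇑(Equiv.swap p q)) P.val
          = (P.map (Equiv.swap p q).toEmbedding).val := rfl
        _ = P.val := by rw [hPm]
    have hf'assign : IsAssignment P W f' := by
      unfold IsAssignment
      rw [← hfs]
      calc Multiset.map f' P.val
          = Multiset.map f' (Multiset.map (Equiv.swap p q) P.val) := by rw [hPmap]
        _ = Multiset.map (fun x => f' (Equiv.swap p q x)) P.val := by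
            rw [Multiset.map_map]; rfl
        _ = Multiset.map fs P.val := by
            exact Multiset.map_congr rfl (fun x _ => hswap x)
    have hrp' : dist p cs / f' p < rs := by
      have hfp : f' p = fs q := by simp [f']
      rw [hfp, ← hdet]
      exact div_lt_div_of_pos_left hdp0 hpp hgt
    have hrq' : dist q cs / f' q < rs := by
      have hfq : f' q = fs p := by simp [f', hqp]
      rw [hfq, ← hdet]
      exact div_lt_div_of_pos_right hlt hpp
    have hother : ∀ x, x ≠ p → x ≠ q → f' x = fs x := by
      intro x h1 h2; simp [f', h1, h2]
    have hsup_le : ∀ x ∈ P, dist x cs / f' x ≤ rs := by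
      intro x hx
      rcases eq_or_ne x p with rfl | h1
      · exact hrp'.le
      rcases eq_or_ne x q with rfl | h2
      · exact hrq'.le
      · rw [hother x h1 h2]; exact hub x hx
    have hsup' : P.sup' hP (fun x => dist x cs / f' x) = rs :=
      le_antisymm (Finset.sup'_le _ _ hsup_le) (hopt f' cs hf'assign)
    have hcenter' : ∀ x, P.sup' hP (fun r => dist r cs / f' r) ≤
        P.sup' hP (fun r => dist r x / f' r) := by
      intro x; rw [hsup']; exact hopt f' x hf'assign
    have hcard := hmindet f' cs hf'assign hcenter' hsup'
    have hsub : P.filter (fun r => dist r cs / f' r = rs) ⊆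
        (P.filter (fun r => dist r cs / fs r = rs)).erase p := by
      intro r hr
      simp only [Finset.mem_filter] at hr
      obtain ⟨hrP, hreq⟩ := hr
      have h1 : r ≠ p := by rintro rfl; exact absurd hreq hrp'.ne
      have h2 : r ≠ q := by rintro rfl; exact absurd hreq hrq'.ne
      rw [Finset.mem_erase]
      exact ⟨h1, Finset.mem_filter.2 ⟨hrP, by rw [← hother r h1 h2]; exact hreq⟩⟩
    have hlt' : (P.filter (fun r => dist r cs / f' r = rs)).card <
        (P.filter (fun r => dist r cs / fs r = rs)).card := by
      calc (P.filter (fun r => dist r cs / f' r = rs)).card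
          ≤ ((P.filter (fun r => dist r cs / fs r = rs)).erase p).card :=
            Finset.card_le_card hsub
        _ < _ := Finset.card_erase_lt_of_mem (Finset.mem_filter.2 ⟨hp, hdet⟩)
    omega
  -- counting
  have hi1 : 1 ≤ i := by
    rw [hi]
    exact Finset.card_pos.2 ⟨p, Finset.mem_filter.2 ⟨hp, le_refl _⟩⟩
  have hin : i ≤ P.card := by rw [hi]; exact Finset.card_filter_le _ _
  have hcount_lt : (P.filter (fun q => fs q < fs p)).card ≤ i - 1 := by
    have hsub : P.filter (fun q => fs q < fs p) ⊆
        (P.filter (fun q => dist q cs ≤ dist p cs)).erase p := by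
      intro q hq
      simp only [Finset.mem_filter] at hq
      obtain ⟨hqP, hqlt⟩ := hq
      have hqp : q ≠ p := by rintro rfl; exact lt_irrefl _ hqlt
      rw [Finset.mem_erase]
      refine ⟨hqp, Finset.mem_filter.2 ⟨hqP, ?_⟩⟩
      by_contra hc
      push_neg at hc
      exact absurd hqlt (not_lt.2 (step1 q hqP hc).le)
    calc (P.filter (fun q => fs q < fs p)).card
        ≤ ((P.filter (fun q => dist q cs ≤ dist p cs)).erase p).card :=
          Finset.card_le_card hsub
      _ = i - 1 := by
          have hpmem : p ∈ P.filter (fun q => dist q cs ≤ dist p cs) :=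
            Finset.mem_filter.2 ⟨hp, le_refl _⟩
          rw [Finset.card_erase_of_mem hpmem, hi]
  have hcount_gt : (P.filter (fun q => fs p < fs q)).card ≤ P.card - i := by
    have hsub : P.filter (fun q => fs p < fs q) ⊆
        P.filter (fun q => ¬ (dist q cs ≤ dist p cs)) := by
      intro q hq
      simp only [Finset.mem_filter] at hq ⊢
      obtain ⟨hqP, hqgt⟩ := hq
      refine ⟨hqP, ?_⟩
      have hqp : q ≠ p := by rintro rfl; exact lt_irrefl _ hqgt
      have hne : dist q cs ≠ dist p cs := fun h => hqp (hdist hqP hp h)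
      intro hle
      rcases lt_or_eq_of_le hle with hlt2 | heq2
      · exact absurd hqgt (not_lt.2 (step2 q hqP hlt2))
      · exact hne heq2
    have hcompl := Finset.card_filter_add_card_filter_not
      (s := P) (p := fun q => dist q cs ≤ dist p cs)
    calc (P.filter (fun q => fs p < fs q)).card
        ≤ (P.filter (fun q => ¬ (dist q cs ≤ dist p cs))).card :=
          Finset.card_le_card hsub
      _ = P.card - i := by omega
  -- translate to the sorted list
  set M : Multiset ℝ := W + Multiset.replicate (P.card - Multiset.card W) 1 with hM
  set l : List ℝ := M.sort (· ≤ ·) with hl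
  have hsorted : l.Pairwise (· ≤ ·) := Multiset.pairwise_sort _ _
  have hlcoe : (l : Multiset ℝ) = M := Multiset.sort_eq _ _
  have hfs' : Multiset.map fs P.val = M := hfs
  have hlen : l.length = P.card := by
    rw [← Multiset.coe_card, hlcoe, ← hfs', Multiset.card_map]
    rfl
  have hfilt : ∀ (pred : ℝ → Prop) (inst : DecidablePred pred),
      (l.filter (fun x => pred x)).length = (P.filter (fun q => pred (fs q))).card := by
    intro pred inst
    have hc : ((l.filter (fun x => pred x) : List ℝ) : Multiset ℝ) =
        Multiset.filter pred (l : Multiset ℝ) := by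
      simp [Multiset.filter_coe]
    calc (l.filter (fun x => pred x)).length
        = Multiset.card (Multiset.filter pred (l : Multiset ℝ)) := by
          rw [← hc]; simp
      _ = Multiset.card (Multiset.filter pred (Multiset.map fs P.val)) := by
          rw [hlcoe, ← hfs']
      _ = Multiset.countP pred (Multiset.map fs P.val) :=
          (Multiset.countP_eq_card_filter _ _).symm
      _ = Multiset.card (Multiset.filter (fun q => pred (fs q)) P.val) := by
          rw [Multiset.countP_map]
      _ = (P.filter (fun q => pred (fs q))).card := rfl
  have hj : i - 1 < l.length := by omega
  have h1' : (l.filter (fun x => x < fs p)).length ≤ i - 1 := by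
    have h := hfilt (fun x => x < fs p) inferInstance
    beta_reduce at h
    rw [h]; exact hcount_lt
  have h2' : (l.filter (fun x => fs p < x)).length ≤ l.length - (i - 1 + 1) := by
    have h := hfilt (fun x => fs p < x) inferInstance
    beta_reduce at h
    rw [h]
    have hii : i - 1 + 1 = i := by omega
    rw [hii, hlen]
    exact hcount_gt
  exact (sorted_getD_key hsorted hj h1' h2').symm
end

section
/- Let f* be an optimal assignment of weights with minimum number of determinators, with center c* and radius r*. For a determinator p of f* and any point q ∈ P \ {p} with d(q,c*) < d(p,c*), we have f*(q) ≤ f*(p). -/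
theorem stmt_8 (P : Finset Pt) (hP : P.Nonempty) (W : Multiset ℝ)
    (hk : Multiset.card W ≤ P.card) (hWpos : ∀ w ∈ W, (0:ℝ) < w)
    (fs : Pt → ℝ) (hfs : IsAssignment P W fs)
    (cs : Pt) (rs : ℝ)
    (hcs : ∀ x : Pt, P.sup' hP (fun p => dist p cs / fs p) ≤ P.sup' hP (fun p => dist p x / fs p))
    (hrs : rs = P.sup' hP (fun p => dist p cs / fs p))
    (hopt : ∀ (f : Pt → ℝ) (c : Pt), IsAssignment P W f →
      rs ≤ P.sup' hP (fun p => dist p c / f p))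
    (hmindet : ∀ (f : Pt → ℝ) (c : Pt), IsAssignment P W f →
      (∀ x : Pt, P.sup' hP (fun p => dist p c / f p) ≤ P.sup' hP (fun p => dist p x / f p)) →
      P.sup' hP (fun p => dist p c / f p) = rs →
      (P.filter (fun p => dist p cs / fs p = rs)).card ≤
        (P.filter (fun p => dist p c / f p = rs)).card)
    (p : Pt) (hp : p ∈ P) (hdet : dist p cs / fs p = rs)
    (q : Pt) (hq : q ∈ P) (hqp : q ≠ p) (hlt : dist q cs < dist p cs) :
    fs q ≤ fs p := by
  classical
  by_contra hcon
  push_neg at hcon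
  -- positivity of weights
  have hpos : ∀ x ∈ P, 0 < fs x := by
    intro x hx
    have hmem : fs x ∈ Multiset.map fs P.val := Multiset.mem_map_of_mem fs hx
    rw [hfs] at hmem
    rcases Multiset.mem_add.1 hmem with h | h
    · exact hWpos _ h
    · rw [Multiset.eq_of_mem_replicate h]; norm_num
  have hfp : 0 < fs p := hpos p hp
  have hfq : 0 < fs q := hpos q hq
  have hdp : 0 < dist p cs := lt_of_le_of_lt dist_nonneg hlt
  -- the swapped assignment
  set f : Pt → ℝ := fun x => if x = p then fs q else if x = q then fs p else fs x with hfdef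
  have hfval : ∀ x, x ≠ p → x ≠ q → f x = fs x := by
    intro x h1 h2; simp [hfdef, h1, h2]
  have hfp' : f p = fs q := by simp [hfdef]
  have hfq' : f q = fs p := by simp [hfdef, hqp]
  have hass : IsAssignment P W f := by
    unfold IsAssignment
    rw [← hfs]
    have hqe : q ∈ P.val.erase p := (P.nodup.mem_erase_iff).2 ⟨hqp, hq⟩
    have h1 : P.val = p ::ₘ q ::ₘ ((P.val.erase p).erase q) := by
      rw [Multiset.cons_erase hqe, Multiset.cons_erase hp]
    have hmapeq : Multiset.map f ((P.val.erase p).erase q)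
        = Multiset.map fs ((P.val.erase p).erase q) := by
      apply Multiset.map_congr rfl
      intro x hx
      have hx1 : x ∈ P.val.erase p := Multiset.mem_of_mem_erase hx
      have hxq : x ≠ q := ((P.nodup.erase p).mem_erase_iff.1 hx).1
      have hxp : x ≠ p := (P.nodup.mem_erase_iff.1 hx1).1
      exact hfval x hxp hxq
    rw [h1]
    simp only [Multiset.map_cons, hfp', hfq', hmapeq]
    exact Multiset.cons_swap _ _ _
  -- bounds
  have hle : ∀ x ∈ P, dist x cs / fs x ≤ rs := by
    intro x hx
    rw [hrs]
    exact Finset.le_sup' (fun y => dist y cs / fs y) hx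
  have hstp : dist p cs / f p < rs := by
    rw [hfp', ← hdet]
    exact div_lt_div_of_pos_left hdp hfp hcon
  have hstq : dist q cs / f q < rs := by
    rw [hfq', ← hdet]
    gcongr
  have hsup : P.sup' hP (fun x => dist x cs / f x) = rs := by
    apply le_antisymm
    · apply Finset.sup'_le
      intro x hx
      by_cases h1 : x = p
      · subst h1; exact le_of_lt hstp
      by_cases h2 : x = q
      · subst h2; exact le_of_lt hstq
      · rw [hfval x h1 h2]; exact hle x hx
    · exact hopt f cs hass
  have hoptc : ∀ x : Pt, P.sup' hP (fun y => dist y cs / f y) ≤ P.sup' hP (fun y => dist y x / f y) := by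
    intro x
    rw [hsup]
    exact hopt f x hass
  have hcard := hmindet f cs hass hoptc hsup
  -- determinators of f are a strict subset
  have hsub : P.filter (fun x => dist x cs / f x = rs) ⊆ P.filter (fun x => dist x cs / fs x = rs) := by
    intro x hx
    rw [Finset.mem_filter] at hx ⊢
    obtain ⟨hxP, hxd⟩ := hx
    refine ⟨hxP, ?_⟩
    by_cases h1 : x = p
    · subst h1; exact absurd hxd (ne_of_lt hstp)
    by_cases h2 : x = q
    · subst h2; exact absurd hxd (ne_of_lt hstq)
    · rwa [hfval x h1 h2] at hxd
  have hpin : p ∈ P.filter (fun x => dist x cs / fs x = rs) := Finset.mem_filter.2 ⟨hp, hdet⟩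
  have hpnot : p ∉ P.filter (fun x => dist x cs / f x = rs) := by
    rw [Finset.mem_filter]
    rintro ⟨-, h⟩
    exact (ne_of_lt hstp) h
  have hss : P.filter (fun x => dist x cs / f x = rs) ⊂ P.filter (fun x => dist x cs / fs x = rs) :=
    ⟨hsub, fun h => hpnot (h hpin)⟩
  have := Finset.card_lt_card hss
  omega
end

section
/- There exists an optimal assignment f* of weights such that for every i, the i-th closest point of P to c(f*) is assigned the i-th smallest value in the sorted multiset W₁ (the weights of W together with n−k copies of 1). -/
/-!
For a fixed center `c`, giving the `i`-th smallest weight to the `i`-th closest point minimizes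
`max_p dist p c / w p` over all assignments `w`: at most `i` points are strictly closer to `c` than
the `i`-th closest one, while at least `i + 1` points receive a weight not exceeding the `i`-th
smallest, so one of the latter is at least as far from `c` and has a ratio at least as large.
The best radius around `c` is therefore the minimum of finitely many continuous functions of `c`.
It is at least `dist p₀ c / ∑ w` for any `p₀ ∈ P`, so it attains a global minimum at some `cs`.
The sorted assignment at `cs` is then optimal, and `cs` is its weighted center.
-/

namespace List

variable {α β : Type*} [LinearOrder β] {d : α → β} {l : List α} {i : ℕ}

theorem SortedLE.apply_getElem_le_apply_getElem (hl : (l.map d).SortedLE) {j : ℕ} (hij : i ≤ j)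
    (hj : j < l.length) : d l[i] ≤ d l[j] := by
  have := hl.getElem_le_getElem_of_le (hi := by simp; omega) (hj := by simpa) hij
  rwa [getElem_map, getElem_map] at this

theorem succ_le_length_filter_le_of_sortedLE_map (hl : (l.map d).SortedLE) (hi : i < l.length) :
    i + 1 ≤ (l.filter fun q => d q ≤ d l[i]).length := by
  have htake : (l.take (i + 1)).filter (fun q => d q ≤ d l[i]) = l.take (i + 1) := by
    refine filter_eq_self.2 fun x hx => ?_
    obtain ⟨j, hj, rfl⟩ := mem_take_iff_getElem.1 hx
    simpa using hl.apply_getElem_le_apply_getElem (by omega) hi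
  calc i + 1 = (l.take (i + 1)).length := by simp; omega
    _ ≤ _ := htake ▸ ((take_sublist _ _).filter _).length_le

theorem length_filter_lt_le_of_sortedLE_map (hl : (l.map d).SortedLE) (hi : i < l.length) :
    (l.filter fun q => d q < d l[i]).length ≤ i := by
  have hdrop : (l.drop i).filter (fun q => d q < d l[i]) = [] := by
    refine filter_eq_nil_iff.2 fun x hx => ?_
    obtain ⟨j, hj, rfl⟩ := mem_drop_iff_getElem.1 hx
    simpa using hl.apply_getElem_le_apply_getElem (j := i + j) (by omega) (by omega)
  calc (l.filter fun q => d q < d l[i]).length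
      = ((l.take i ++ l.drop i).filter fun q => d q < d l[i]).length := by rw [take_append_drop]
    _ ≤ (l.take i).length := by rw [filter_append, hdrop, append_nil]; exact length_filter_le _ _
    _ ≤ i := by simp

theorem exists_perm_sortedLE_map (d : α → β) (l : List α) :
    ∃ l' : List α, l'.Perm l ∧ (l'.map d).SortedLE :=
  ⟨l.mergeSort (fun a b => d a ≤ d b), mergeSort_perm _ _, Pairwise.sortedLE <| pairwise_map.2 <|
    (pairwise_mergeSort
      (fun _ _ _ hab hbc => by simp only [decide_eq_true_eq] at *; exact hab.trans hbc)
      (fun a b => by simpa using le_total (d a) (d b)) l).imp (by simp)⟩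

end List

theorem Finset.card_filter_eq_length_filter_of_perm {α : Type*} {P : Finset α} {l : List α}
    (hlP : l.Perm P.toList) (r : α → Prop) [DecidablePred r] :
    (P.filter r).card = (l.filter r).length := by
  rw [(hlP.filter _).length_eq, ← Multiset.coe_card, ← Multiset.filter_coe, Finset.coe_toList]
  rfl

theorem Finset.card_filter_le_eq_length_filter_of_map_eq {α : Type*} {P : Finset α} {f : α → ℝ}
    {L : List ℝ} (hf : P.val.map f = L) (t : ℝ) :
    (P.filter fun q => f q ≤ t).card = (L.filter (· ≤ t)).length := by
  rw [← Multiset.coe_card, ← Multiset.filter_coe, ← hf, Multiset.filter_map, Multiset.card_map]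
  rfl

section Assignment

variable {α : Type*} [DecidableEq α]

def assignAlong (L : List ℝ) (l : List α) (p : α) : ℝ := L.getD (l.idxOf p) 0

theorem assignAlong_getElem {L : List ℝ} {l : List α} (hl : l.Nodup) {i : ℕ} (hi : i < l.length)
    (hiL : i < L.length) : assignAlong L l l[i] = L[i] := by
  rw [assignAlong, hl.idxOf_getElem, List.getD_eq_getElem]

theorem map_assignAlong_self {L : List ℝ} {l : List α} (hl : l.Nodup)
    (hlen : l.length = L.length) : l.map (assignAlong L l) = L :=
  List.ext_getElem (by simpa using hlen) fun i hi hiL => by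
    simpa using assignAlong_getElem hl (by simpa using hi) hiL

theorem map_assignAlong {P : Finset α} {L : List ℝ} {l : List α} (hlP : l.Perm P.toList)
    (hL : L.length = P.card) : P.val.map (assignAlong L l) = L := by
  rw [← Finset.coe_toList P, ← Multiset.coe_eq_coe.2 hlP, Multiset.map_coe,
    map_assignAlong_self (hlP.nodup_iff.2 P.nodup_toList) (by simp [hlP.length_eq, hL])]

theorem sup'_div_assignAlong_le {P : Finset α} (hP : P.Nonempty) {d : α → ℝ}
    (hd : ∀ p ∈ P, 0 ≤ d p) {l : List α} (hlP : l.Perm P.toList) (hl : (l.map d).SortedLE)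
    {L : List ℝ} (hL : L.SortedLE) (hLpos : ∀ a ∈ L, 0 < a) {f : α → ℝ}
    (hf : P.val.map f = L) :
    P.sup' hP (fun p => d p / assignAlong L l p) ≤ P.sup' hP (fun p => d p / f p) := by
  have hlen : L.length = l.length := by
    rw [hlP.length_eq, Finset.length_toList, ← Multiset.coe_card, ← hf, Multiset.card_map,
      Finset.card_val]
  refine Finset.sup'_le _ _ fun p hp => ?_
  obtain ⟨i, hi, rfl⟩ := List.getElem_of_mem (hlP.mem_iff.2 (Finset.mem_toList.2 hp))
  have hiL : i < L.length := hlen ▸ hi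
  have hcard : (P.filter fun q => d q < d l[i]).card < (P.filter fun q => f q ≤ L[i]).card := by
    rw [Finset.card_filter_eq_length_filter_of_perm hlP,
      Finset.card_filter_le_eq_length_filter_of_map_eq hf]
    have hlight : i + 1 ≤ (L.filter (· ≤ L[i])).length := by
      simpa using List.succ_le_length_filter_le_of_sortedLE_map (d := id) (by simpa using hL) hiL
    have hclose := List.length_filter_lt_le_of_sortedLE_map hl hi
    omega
  obtain ⟨q, hq, hqd⟩ := Finset.exists_mem_notMem_of_card_lt_card hcard
  simp only [Finset.mem_filter, not_and, not_lt] at hq hqd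
  have hfq : 0 < f q := hLpos _ (by
    rw [← Multiset.mem_coe, ← hf]; exact Multiset.mem_map_of_mem f hq.1)
  rw [assignAlong_getElem (hlP.nodup_iff.2 P.nodup_toList) hi hiL]
  calc d l[i] / L[i] ≤ d q / f q := div_le_div₀ (hd q hq.1) (hqd hq.1) hfq hq.2
    _ ≤ _ := Finset.le_sup' (fun p => d p / f p) hq.1

theorem card_filter_le_eq_idxOf_add_one {β : Type*} [LinearOrder β] {P : Finset α} {d : α → β}
    {l : List α} (hlP : l.Perm P.toList) (hl : (l.map d).SortedLE) (hinj : Set.InjOn d P)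
    {p : α} (hp : p ∈ P) : (P.filter fun q => d q ≤ d p).card = l.idxOf p + 1 := by
  have hi : l.idxOf p < l.length :=
    List.idxOf_lt_length_iff.2 (hlP.mem_iff.2 (Finset.mem_toList.2 hp))
  have hinsert : (P.filter fun q => d q ≤ d p) = insert p (P.filter fun q => d q < d p) := by
    ext q
    simp only [Finset.mem_filter, Finset.mem_insert]
    constructor
    · rintro ⟨hq, hqp⟩
      rcases hqp.lt_or_eq with h | h
      · exact Or.inr ⟨hq, h⟩
      · exact Or.inl (hinj hq hp h)
    · rintro (rfl | ⟨hq, h⟩)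
      · exact ⟨hp, le_rfl⟩
      · exact ⟨hq, h.le⟩
  have hle := List.succ_le_length_filter_le_of_sortedLE_map hl hi
  have hlt := List.length_filter_lt_le_of_sortedLE_map hl hi
  rw [List.getElem_idxOf hi, ← Finset.card_filter_eq_length_filter_of_perm hlP] at hle hlt
  rw [hinsert, Finset.card_insert_of_notMem (by simp)] at hle ⊢
  omega

theorem assignAlong_eq_getD_card_filter {β : Type*} [LinearOrder β] {P : Finset α} {d : α → β}
    {l : List α} (hlP : l.Perm P.toList) (hl : (l.map d).SortedLE) (hinj : Set.InjOn d P)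
    (L : List ℝ) {p : α} (hp : p ∈ P) :
    assignAlong L l p = L.getD ((P.filter fun q => d q ≤ d p).card - 1) 0 := by
  rw [card_filter_le_eq_idxOf_add_one hlP hl hinj hp, Nat.add_sub_cancel, assignAlong]

end Assignment

section MinRadius

variable {α : Type*} [PseudoMetricSpace α] [DecidableEq α] {P : Finset α} (hP : P.Nonempty)
  (L : List ℝ)

noncomputable def minRadius (c : α) : ℝ :=
  P.toList.permutations.toFinset.inf' ⟨P.toList, by simp⟩ fun l =>
    P.sup' hP fun p => dist p c / assignAlong L l p

variable {L}

theorem minRadius_le_sup' (hL : L.SortedLE) (hLpos : ∀ a ∈ L, 0 < a) {f : α → ℝ}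
    (hf : P.val.map f = L) (c : α) :
    minRadius hP L c ≤ P.sup' hP fun p => dist p c / f p := by
  obtain ⟨l, hlP, hl⟩ := List.exists_perm_sortedLE_map (dist · c) P.toList
  exact (Finset.inf'_le _ (List.mem_toFinset.2 (List.mem_permutations.2 hlP))).trans
    (sup'_div_assignAlong_le hP (fun _ _ => dist_nonneg) hlP hl hL hLpos hf)

theorem sup'_le_minRadius (hL : L.SortedLE) (hLpos : ∀ a ∈ L, 0 < a) (hlen : L.length = P.card)
    {c : α} {l : List α} (hlP : l.Perm P.toList) (hl : (l.map (dist · c)).SortedLE) :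
    (P.sup' hP fun p => dist p c / assignAlong L l p) ≤ minRadius hP L c := by
  obtain ⟨l', hl', heq⟩ := Finset.exists_mem_eq_inf'
    (s := P.toList.permutations.toFinset) ⟨P.toList, by simp⟩
    fun l => P.sup' hP fun p => dist p c / assignAlong L l p
  rw [minRadius, heq]
  exact sup'_div_assignAlong_le hP (fun _ _ => dist_nonneg) hlP hl hL hLpos
    (map_assignAlong (List.mem_permutations.1 (List.mem_toFinset.1 hl')) hlen)

theorem continuous_minRadius : Continuous (minRadius hP L) :=
  Continuous.finset_inf'_apply _ fun _ _ => Continuous.finset_sup'_apply hP fun _ _ =>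
    (continuous_const.dist continuous_id).div_const _

theorem exists_forall_minRadius_le [ProperSpace α] (hLpos : ∀ a ∈ L, 0 < a)
    (hlen : L.length = P.card) : ∃ cs, ∀ c, minRadius hP L cs ≤ minRadius hP L c := by
  obtain ⟨p₀, hp₀⟩ := hP
  have : Nonempty α := ⟨p₀⟩
  have hbound : ∀ c, dist p₀ c / L.sum ≤ minRadius ⟨p₀, hp₀⟩ L c := fun c =>
    Finset.le_inf' _ _ fun l hl => by
      have hw : assignAlong L l p₀ ∈ L := by
        rw [← Multiset.mem_coe,
          ← map_assignAlong (List.mem_permutations.1 (List.mem_toFinset.1 hl)) hlen]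
        exact Multiset.mem_map_of_mem _ hp₀
      calc dist p₀ c / L.sum ≤ dist p₀ c / assignAlong L l p₀ :=
            div_le_div_of_nonneg_left dist_nonneg (hLpos _ hw)
              (List.single_le_sum (fun a ha => (hLpos a ha).le) _ hw)
        _ ≤ _ := Finset.le_sup' (fun p => dist p c / assignAlong L l p) hp₀
  have hsum : 0 < L.sum := List.sum_pos _ hLpos (List.ne_nil_of_length_pos (by
    rw [hlen]; exact Finset.card_pos.2 ⟨p₀, hp₀⟩))
  exact (continuous_minRadius _).exists_forall_le <| Filter.tendsto_atTop_mono hbound <|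
    (tendsto_dist_left_cocompact_atTop p₀).atTop_div_const hsum

end MinRadius

theorem stmt_9 (P : Finset Pt) (hP : P.Nonempty) (W : Multiset ℝ)
    (hk : Multiset.card W ≤ P.card) (hWpos : ∀ w ∈ W, (0:ℝ) < w) :
    ∃ (fs : Pt → ℝ) (cs : Pt), IsAssignment P W fs ∧
      -- cs is the weighted center of fs
      (∀ x : Pt, P.sup' hP (fun p => dist p cs / fs p) ≤
        P.sup' hP (fun p => dist p x / fs p)) ∧
      -- fs is optimal: its covering radius is at most that of any assignment
      (∀ (f : Pt → ℝ) (c : Pt), IsAssignment P W f →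
        P.sup' hP (fun p => dist p cs / fs p) ≤ P.sup' hP (fun p => dist p c / f p)) ∧
      -- if distances to cs are pairwise distinct, the i-th closest point of P to cs
      -- gets the i-th smallest weight of W₁ = W + (n-k) copies of 1
      (Set.InjOn (fun p => dist p cs) (P : Set Pt) → ∀ p ∈ P,
        fs p = ((W + Multiset.replicate (P.card - Multiset.card W) 1).sort (· ≤ ·)).getD
          ((P.filter (fun q => dist q cs ≤ dist p cs)).card - 1) 0) := by
  classical
  set L := (W + Multiset.replicate (P.card - Multiset.card W) 1).sort (· ≤ ·)
  have hLW : (L : Multiset ℝ) = W + Multiset.replicate (P.card - Multiset.card W) 1 :=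
    Multiset.sort_eq _ _
  have hL : L.SortedLE := (Multiset.pairwise_sort _ _).sortedLE
  have hlen : L.length = P.card := by simp [L]; omega
  have hLpos : ∀ a ∈ L, 0 < a := fun a ha => by
    rcases Multiset.mem_add.1 (hLW ▸ Multiset.mem_coe.2 ha) with h | h
    exacts [hWpos a h, Multiset.eq_of_mem_replicate h ▸ one_pos]
  obtain ⟨cs, hcs⟩ := exists_forall_minRadius_le hP hLpos hlen
  obtain ⟨l, hlP, hl⟩ := List.exists_perm_sortedLE_map (dist · cs) P.toList
  have hfs : IsAssignment P W (assignAlong L l) := (map_assignAlong hlP hlen).trans hLW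
  have hopt : ∀ f c, IsAssignment P W f → (P.sup' hP fun p => dist p cs / assignAlong L l p) ≤
      P.sup' hP fun p => dist p c / f p := fun f c hf =>
    (sup'_le_minRadius hP hL hLpos hlen hlP hl).trans
      ((hcs c).trans (minRadius_le_sup' hP hL hLpos (hf.trans hLW.symm) c))
  exact ⟨assignAlong L l, cs, hfs, fun x => hopt _ x hfs, hopt,
    fun hinj p hp => assignAlong_eq_getD_card_filter hlP hl hinj L hp⟩
end

section
/- Let P be a finite set of weighted points in ℝ² with weights w(p) > 0, and let c be any point with max_{p∈P} d(p,c)/w(p) = r. If there exist three points p₁, p₂, p₃ ∈ P with d(p_i,c)/w(p_i) = r for i = 1,2,3 and c lies in the interior of the triangle p₁p₂p₃ (i.e., c is a strict convex combination of p₁, p₂, p₃), then c is the weighted center of P, i.e., c minimizes x ↦ max_{p∈P} d(p,x)/w(p). -/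
open RealInnerProductSpace

lemma aux_half (p x c : Pt) (h : dist p x < dist p c) :
    2 * ⟪p, c - x⟫ < ‖c‖ ^ 2 - ‖x‖ ^ 2 := by
  have h2 : dist p x ^ 2 < dist p c ^ 2 := by
    have := dist_nonneg (x := p) (y := x)
    nlinarith
  rw [dist_eq_norm, dist_eq_norm, norm_sub_sq_real, norm_sub_sq_real] at h2
  rw [inner_sub_right]
  linarith

theorem stmt_16 (P : Finset Pt) (hP : P.Nonempty) (w : Pt → ℝ)
    (hw : ∀ p ∈ P, 0 < w p) (c : Pt) (r : ℝ)
    (hmax : P.sup' hP (fun p => dist p c / w p) = r)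
    (p₁ p₂ p₃ : Pt) (h₁ : p₁ ∈ P) (h₂ : p₂ ∈ P) (h₃ : p₃ ∈ P)
    (hd₁ : dist p₁ c / w p₁ = r) (hd₂ : dist p₂ c / w p₂ = r) (hd₃ : dist p₃ c / w p₃ = r)
    (hint : ∃ a b d : ℝ, 0 < a ∧ 0 < b ∧ 0 < d ∧ a + b + d = 1 ∧
      c = a • p₁ + b • p₂ + d • p₃) :
    ∀ x : Pt, P.sup' hP (fun p => dist p c / w p) ≤ P.sup' hP (fun p => dist p x / w p) := by
  intro x
  rw [hmax]
  have key : dist p₁ c ≤ dist p₁ x ∨ dist p₂ c ≤ dist p₂ x ∨ dist p₃ c ≤ dist p₃ x := by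
    by_contra hcon
    push_neg at hcon
    obtain ⟨hx1, hx2, hx3⟩ := hcon
    obtain ⟨a, b, d, ha, hb, hd, hsum, hc⟩ := hint
    have k1 := aux_half p₁ x c hx1
    have k2 := aux_half p₂ x c hx2
    have k3 := aux_half p₃ x c hx3
    have hcc : ⟪c, c - x⟫ = a * ⟪p₁, c - x⟫ + b * ⟪p₂, c - x⟫ + d * ⟪p₃, c - x⟫ := by
      rw [hc, inner_add_left, inner_add_left, real_inner_smul_left,
        real_inner_smul_left, real_inner_smul_left]
    have hsq : (0:ℝ) ≤ ‖c - x‖ ^ 2 := sq_nonneg _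
    rw [norm_sub_sq_real] at hsq
    have hcx : ⟪c, c - x⟫ = ‖c‖ ^ 2 - ⟪c, x⟫ := by
      rw [inner_sub_right, real_inner_self_eq_norm_sq]
    nlinarith [mul_lt_mul_of_pos_left k1 ha, mul_lt_mul_of_pos_left k2 hb,
      mul_lt_mul_of_pos_left k3 hd]
  rcases key with hk | hk | hk
  · refine le_trans ?_ (Finset.le_sup' (fun p => dist p x / w p) h₁)
    rw [← hd₁]
    gcongr
    exact (hw _ h₁).le
  · refine le_trans ?_ (Finset.le_sup' (fun p => dist p x / w p) h₂)
    rw [← hd₂]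
    gcongr
    exact (hw _ h₂).le
  · refine le_trans ?_ (Finset.le_sup' (fun p => dist p x / w p) h₃)
    rw [← hd₃]
    gcongr
    exact (hw _ h₃).le
end

section
/- Let P be a finite set of weighted points in ℝ² and let c be a point with max_{p∈P} d(p,c)/w(p) = r attained by exactly two points p₁, p₂ ∈ P. If c minimizes max_{p∈P} d(p,x)/w(p), then c lies on the line segment between p₁ and p₂. -/
open Filter Topology AffineMap

theorem isCompact_segment {E : Type*} [AddCommGroup E] [Module ℝ E] [TopologicalSpace E]
    [IsTopologicalAddGroup E] [ContinuousSMul ℝ E] (x y : E) : IsCompact (segment ℝ x y) :=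
  convexHull_pair (𝕜 := ℝ) x y ▸ (Set.toFinite {x, y}).isCompact_convexHull ℝ

theorem Convex.exists_forall_dist_lt_of_notMem {F : Type*} [NormedAddCommGroup F]
    [InnerProductSpace ℝ F] {K : Set F} (hK : Convex ℝ K) (hne : K.Nonempty)
    (hcomplete : IsComplete K) {u : F} (hu : u ∉ K) :
    ∃ v ∈ K, ∀ w ∈ K, dist w v < dist w u := by
  obtain ⟨v, hvK, hv⟩ := exists_norm_eq_iInf_of_complete_convex hne hcomplete hK u
  have hobtuse := (norm_eq_iInf_iff_real_inner_le_zero hK hvK).1 hv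
  refine ⟨v, hvK, fun w hw => ?_⟩
  have huv : 0 < ‖u - v‖ := norm_pos_iff.2 (sub_ne_zero.2 fun h => hu (h ▸ hvK))
  have hinner : inner ℝ (w - v) (u - v) ≤ 0 := real_inner_comm (w - v) (u - v) ▸ hobtuse w hw
  have hsq : ‖w - u‖ ^ 2 = ‖w - v‖ ^ 2 - 2 * inner ℝ (w - v) (u - v) + ‖u - v‖ ^ 2 := by
    rw [← norm_sub_sq_real, sub_sub_sub_cancel_right]
  rw [dist_eq_norm, dist_eq_norm]
  exact lt_of_pow_lt_pow_left₀ 2 (norm_nonneg _) (by nlinarith)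

theorem dist_lineMap_lt {E : Type*} [SeminormedAddCommGroup E] [NormedSpace ℝ E]
    {p c c' : E} (h : dist p c' < dist p c) {t : ℝ} (ht₀ : 0 < t) (ht₁ : t ≤ 1) :
    dist p (lineMap c c' t) < dist p c := by
  calc dist p (lineMap c c' t) = dist (lineMap c c' t) p := dist_comm _ _
    _ ≤ (1 - t) * dist c p + t * dist c' p := by
      simpa only [smul_eq_mul, ← lineMap_apply_module] using (convexOn_univ_dist p).2
        (Set.mem_univ c) (Set.mem_univ c') (sub_nonneg.2 ht₁) ht₀.le (sub_add_cancel 1 t)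
    _ < dist p c := by
      rw [dist_comm c p, dist_comm c' p]
      nlinarith

theorem stmt_17_general (P : Finset Pt) (hP : P.Nonempty) (w : Pt → ℝ)
    (hw : ∀ p ∈ P, 0 < w p) (c : Pt) (r : ℝ)
    (hmax : P.sup' hP (fun p => dist p c / w p) = r)
    (p₁ p₂ : Pt)
    (honly : ∀ p ∈ P, p ≠ p₁ → p ≠ p₂ → dist p c / w p < r)
    (hmin : ∀ x : Pt, P.sup' hP (fun p => dist p c / w p) ≤ P.sup' hP (fun p => dist p x / w p)) :
    c ∈ segment ℝ p₁ p₂ := by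
  by_contra hc
  obtain ⟨c', -, hcloser⟩ := (convex_segment p₁ p₂).exists_forall_dist_lt_of_notMem
    ⟨p₁, left_mem_segment ℝ p₁ p₂⟩ (isCompact_segment p₁ p₂).isComplete hc
  have hnear : ∀ᶠ t in 𝓝[>] (0 : ℝ), ∀ p ∈ P, dist p (lineMap c c' t) / w p < r := by
    refine (eventually_all_finset P).2 fun p hp => ?_
    by_cases hend : p = p₁ ∨ p = p₂
    · have hpK : p ∈ segment ℝ p₁ p₂ := by
        rcases hend with rfl | rfl
        exacts [left_mem_segment ℝ p p₂, right_mem_segment ℝ p₁ p]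
      have hle : dist p c / w p ≤ r := hmax ▸ Finset.le_sup' (fun p => dist p c / w p) hp
      filter_upwards [Ioc_mem_nhdsGT one_pos] with t ht
      exact (div_lt_div_of_pos_right (dist_lineMap_lt (hcloser p hpK) ht.1 ht.2) (hw p hp)).trans_le
        hle
    · obtain ⟨hp₁, hp₂⟩ := not_or.1 hend
      have hcont : Continuous fun t : ℝ => dist p (lineMap c c' t) / w p := by fun_prop
      exact ((hcont.tendsto' 0 _ (by simp)).mono_left nhdsWithin_le_nhds).eventually_lt_const
        (honly p hp hp₁ hp₂)
  obtain ⟨t, ht⟩ := hnear.exists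
  exact ((Finset.sup'_lt_iff hP).2 ht).not_ge (hmax ▸ hmin (lineMap c c' t))

theorem stmt_17 (P : Finset Pt) (hP : P.Nonempty) (w : Pt → ℝ)
    (hw : ∀ p ∈ P, 0 < w p) (c : Pt) (r : ℝ)
    (hmax : P.sup' hP (fun p => dist p c / w p) = r)
    (p₁ p₂ : Pt) (h₁ : p₁ ∈ P) (h₂ : p₂ ∈ P) (hne : p₁ ≠ p₂)
    (hd₁ : dist p₁ c / w p₁ = r) (hd₂ : dist p₂ c / w p₂ = r)
    (honly : ∀ p ∈ P, p ≠ p₁ → p ≠ p₂ → dist p c / w p < r)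
    (hmin : ∀ x : Pt, P.sup' hP (fun p => dist p c / w p) ≤ P.sup' hP (fun p => dist p x / w p)) :
    c ∈ segment ℝ p₁ p₂ :=
  stmt_17_general P hP w hw c r hmax p₁ p₂ honly hmin
end
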